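/- Let (X,τ_X,d_X) and (Y,τ_Y,d_Y) be extended metric-topological spaces and let φ : (X,τ_X,d_X) → (Y,τ_Y,d_Y) be a continuous-short map. Then the following are equivalent: (a) for every extended metric-topological space (Z,τ_Z,d_Z) and all continuous-short maps ψ₁,ψ₂ : (Y,τ_Y,d_Y) → (Z,τ_Z,d_Z), ψ₁ ∘ φ = ψ₂ ∘ φ implies ψ₁ = ψ₂ (i.e. φ is an epimorphism); (b) the image φ(X) is dense in (Y,τ_Y). -/

import Mathlib

open scoped ENNReal

universe u v w

/-- An extended pseudodistance on `X`. -/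
structure IsExtPseudoDist {X : Type*} (d : X → X → ℝ≥0∞) : Prop where
  refl : ∀ x, d x x = 0
  symm : ∀ x y, d x y = d y x
  triangle : ∀ x y z, d x y ≤ d x z + d z y

/-- An extended distance on `X`. -/
structure IsExtDist {X : Type*} (d : X → X → ℝ≥0∞) : Prop where
  eq_zero_iff : ∀ x y, d x y = 0 ↔ x = y
  symm : ∀ x y, d x y = d y x
  triangle : ∀ x y z, d x y ≤ d x z + d z y

/-- `LIP_{b,1}(X,τ,d)`: bounded `τ`-continuous functions `f : X → ℝ` with
`|f x - f y| ≤ d x y`. -/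
def Lip1 {X : Type*} (τ : TopologicalSpace X) (d : X → X → ℝ≥0∞) : Set (X → ℝ) :=
  {f | @Continuous X ℝ τ _ f ∧ (∃ C : ℝ, ∀ x, |f x| ≤ C) ∧
    ∀ x y, ENNReal.ofReal |f x - f y| ≤ d x y}

/-- `(X,τ,d)` is an extended metric-topological space. -/
def IsEMT {X : Type*} (τ : TopologicalSpace X) (d : X → X → ℝ≥0∞) : Prop :=
  IsExtDist d ∧
  τ = (⨅ f ∈ Lip1 τ d, TopologicalSpace.induced f inferInstance) ∧
  (∀ x y, d x y = ⨆ f ∈ Lip1 τ d, ENNReal.ofReal |f x - f y|)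

/-- A continuous-short map between (pre-)extended (pseudo)metric-topological spaces. -/
def ContinuousShort {X Y : Type*} (τX : TopologicalSpace X) (dX : X → X → ℝ≥0∞)
    (τY : TopologicalSpace Y) (dY : Y → Y → ℝ≥0∞) (φ : X → Y) : Prop :=
  @Continuous X Y τX τY φ ∧ ∀ x y, dY (φ x) (φ y) ≤ dX x y

open scoped Topology
open Filter

/-! A dense image makes `φ` an epimorphism because e.m.t. spaces are Hausdorff (the recovered
distance separates points by continuous real functions). Conversely, if `y₀ ∉ closure (range φ)`,
the initial topology of `LIP_{b,1}` yields a continuous short bump `g ≥ 0` with `g y₀ > 0`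
vanishing on `range φ`; then `0` and `g`, seen as maps into the e.m.t. space `ℝ`, agree after
`φ` but differ at `y₀`. Bumps around `y₀` form a filter since the minimum of two bumps is a bump,
and this filter refines every `comap f (𝓝 (f y₀))`, `f ∈ LIP_{b,1}`, hence `𝓝 y₀`. -/

section ContinuousShort

theorem ContinuousShort.comp {X Y Z : Type*} {τX : TopologicalSpace X} {dX : X → X → ℝ≥0∞}
    {τY : TopologicalSpace Y} {dY : Y → Y → ℝ≥0∞} {τZ : TopologicalSpace Z}
    {dZ : Z → Z → ℝ≥0∞} {g : Y → Z} {f : X → Y} (hg : ContinuousShort τY dY τZ dZ g)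
    (hf : ContinuousShort τX dX τY dY f) : ContinuousShort τX dX τZ dZ (g ∘ f) :=
  ⟨hg.1.comp hf.1, fun x y => (hg.2 _ _).trans (hf.2 x y)⟩

theorem LipschitzWith.continuousShort {α β : Type*} [PseudoEMetricSpace α]
    [PseudoEMetricSpace β] {g : α → β} (hg : LipschitzWith 1 g) :
    ContinuousShort inferInstance edist inferInstance edist g :=
  ⟨hg.continuous, fun x y => by simpa using hg x y⟩

theorem continuousShort_const {X Z : Type*} [τ : TopologicalSpace X] {d : X → X → ℝ≥0∞}
    [PseudoEMetricSpace Z] (z : Z) :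
    ContinuousShort τ d inferInstance edist fun _ => z :=
  ⟨continuous_const, fun x y => by simp⟩

variable {Y : Type*} [τ : TopologicalSpace Y] {d : Y → Y → ℝ≥0∞}

theorem mem_lip1_iff {f : Y → ℝ} :
    f ∈ Lip1 τ d ↔ ContinuousShort τ d inferInstance edist f ∧ ∃ C, ∀ y, |f y| ≤ C := by
  simp only [Lip1, ContinuousShort, Set.mem_ofPred_eq, edist_dist, Real.dist_eq]
  tauto

theorem ContinuousShort.min {f g : Y → ℝ} (hf : ContinuousShort τ d inferInstance edist f)
    (hg : ContinuousShort τ d inferInstance edist g) :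
    ContinuousShort τ d inferInstance edist fun y => min (f y) (g y) := by
  refine ⟨hf.1.min hg.1, fun x y => le_trans ?_ (max_le (hf.2 x y) (hg.2 x y))⟩
  simp only [edist_dist, Real.dist_eq, ← ENNReal.ofReal_max]
  exact ENNReal.ofReal_le_ofReal (abs_min_sub_min_le_max _ _ _ _)

end ContinuousShort

section MetricSpace

variable {Z : Type*} [MetricSpace Z]

theorem min_dist_mem_lip1 (a : Z) {r : ℝ} (hr : 0 ≤ r) :
    (fun z => min (dist z a) r) ∈ Lip1 inferInstance edist := by
  refine mem_lip1_iff.mpr ⟨((LipschitzWith.dist_left a).min_const r).continuousShort, r, ?_⟩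
  intro z
  rw [abs_of_nonneg (le_min dist_nonneg hr)]
  exact min_le_right _ _

theorem isEMT_of_metricSpace : IsEMT (inferInstance : TopologicalSpace Z) edist := by
  refine ⟨⟨fun x y => edist_eq_zero, edist_comm, fun x y z => edist_triangle x z y⟩,
    le_antisymm (le_iInf₂ fun f hf => continuous_iff_le_induced.mp hf.1) ?_,
    fun x y => le_antisymm ?_ (iSup₂_le fun f hf => hf.2.2 x y)⟩
  · refine le_of_nhds_le_nhds fun x => Metric.nhds_basis_ball.ge_iff.mpr fun ε hε => ?_
    have hopen : IsOpen[⨅ f ∈ Lip1 inferInstance edist, .induced f inferInstance]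
        ((fun z => min (dist z x) ε) ⁻¹' Set.Iio ε) :=
      (isOpen_induced isOpen_Iio).mono (iInf₂_le _ (min_dist_mem_lip1 x hε.le))
    refine mem_of_superset (@IsOpen.mem_nhds _ (⨅ f ∈ Lip1 inferInstance edist,
      .induced f inferInstance) _ _ hopen (by simpa using hε)) fun z hz => ?_
    simpa [lt_irrefl] using hz
  · refine le_iSup₂_of_le (fun z => min (dist z x) (dist x y)) (min_dist_mem_lip1 x dist_nonneg) ?_
    simp [edist_dist, dist_comm]

end MetricSpace

theorem IsEMT.t2Space {Z : Type*} [τ : TopologicalSpace Z] {d : Z → Z → ℝ≥0∞}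
    (hZ : IsEMT τ d) : T2Space Z := by
  refine ⟨fun z₁ z₂ hne => ?_⟩
  obtain ⟨f, hf, hfz⟩ : ∃ f ∈ Lip1 τ d, f z₁ ≠ f z₂ := by
    by_contra! h
    refine hne ((hZ.1.eq_zero_iff z₁ z₂).mp ?_)
    rw [hZ.2.2]
    simp +contextual [h]
  exact separated_by_continuous hf.1 hfz

section Bump

variable {Y : Type*} [τ : TopologicalSpace Y] (d : Y → Y → ℝ≥0∞)

def bumpFilter (y₀ : Y) : Filter Y where
  sets := {U | ∃ h : Y → ℝ, ContinuousShort τ d inferInstance edist h ∧ 0 < h y₀ ∧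
    {y | 0 < h y} ⊆ U}
  univ_sets := ⟨fun _ => 1, continuousShort_const 1, one_pos, Set.subset_univ _⟩
  sets_of_superset := fun ⟨h, hh, hy₀, hU⟩ hUV => ⟨h, hh, hy₀, hU.trans hUV⟩
  inter_sets := fun ⟨h₁, hh₁, hy₁, hU⟩ ⟨h₂, hh₂, hy₂, hV⟩ =>
    ⟨_, hh₁.min hh₂, lt_min hy₁ hy₂, fun y (hy : 0 < min (h₁ y) (h₂ y)) =>
      ⟨hU (lt_min_iff.mp hy).1, hV (lt_min_iff.mp hy).2⟩⟩

variable {d}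

theorem bumpFilter_le_comap {f : Y → ℝ} (hf : f ∈ Lip1 τ d) (y₀ : Y) :
    bumpFilter d y₀ ≤ comap f (𝓝 (f y₀)) := by
  intro U hU
  obtain ⟨V, hV, hVU⟩ := mem_comap.mp hU
  obtain ⟨ε, hε, hball⟩ := Metric.mem_nhds_iff.mp hV
  have hcone : LipschitzWith 1 fun t : ℝ => ε - |t - f y₀| :=
    LipschitzWith.of_dist_le_mul fun s t => by
      rw [NNReal.coe_one, one_mul, Real.dist_eq, Real.dist_eq, sub_sub_sub_cancel_left]
      exact (abs_abs_sub_abs_le_abs_sub _ _).trans_eq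
        (by rw [sub_sub_sub_cancel_right, abs_sub_comm])
  refine ⟨_, hcone.continuousShort.comp (mem_lip1_iff.mp hf).1, by simpa using hε,
    fun y hy => hVU (hball ?_)⟩
  simpa [Real.dist_eq] using hy

theorem bumpFilter_le_nhds (hτ : τ = ⨅ f ∈ Lip1 τ d, .induced f inferInstance) (y₀ : Y) :
    bumpFilter d y₀ ≤ 𝓝 y₀ := by
  have hnhds : 𝓝 y₀ = ⨅ f ∈ Lip1 τ d, comap f (𝓝 (f y₀)) := by
    conv_lhs => rw [hτ]
    simp only [nhds_iInf, nhds_induced]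
  rw [hnhds]
  exact le_iInf₂ fun f hf => bumpFilter_le_comap hf y₀

theorem exists_continuousShort_eqOn_zero_of_notMem_closure
    (hτ : τ = ⨅ f ∈ Lip1 τ d, .induced f inferInstance) {s : Set Y} {y₀ : Y}
    (hy₀ : y₀ ∉ closure s) :
    ∃ g : Y → ℝ, ContinuousShort τ d inferInstance edist g ∧ Set.EqOn g 0 s ∧ g y₀ ≠ 0 := by
  obtain ⟨h, hh, hhy₀, hpos⟩ :=
    bumpFilter_le_nhds hτ y₀ (isClosed_closure.isOpen_compl.mem_nhds hy₀)
  refine ⟨_, ((LipschitzWith.id.max_const 0).continuousShort).comp hh, fun y hy => ?_,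
    by simpa using hhy₀⟩
  have hy_nonpos : h y ≤ 0 := not_lt.mp fun hy_pos => hpos hy_pos (subset_closure hy)
  simpa using hy_nonpos

end Bump

theorem emt_epi_iff_denseRange_general {X : Type u} {Y : Type v}
    (τY : TopologicalSpace Y) (dY : Y → Y → ℝ≥0∞)
    (hY : IsEMT τY dY)
    (φ : X → Y) :
    (∀ (Z : Type w) (τZ : TopologicalSpace Z) (dZ : Z → Z → ℝ≥0∞), IsEMT τZ dZ →
      ∀ ψ₁ ψ₂ : Y → Z, ContinuousShort τY dY τZ dZ ψ₁ → ContinuousShort τY dY τZ dZ ψ₂ →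
        ψ₁ ∘ φ = ψ₂ ∘ φ → ψ₁ = ψ₂) ↔
    @Dense Y τY (Set.range φ) := by
  let := τY
  constructor
  · intro hepi y₀
    by_contra hy₀
    obtain ⟨g, hg, hg0, hgy₀⟩ := exists_continuousShort_eqOn_zero_of_notMem_closure hY.2.1 hy₀
    have hup : LipschitzWith 1 (ULift.up.{w} : ℝ → ULift ℝ) := .of_edist_le fun _ _ => le_rfl
    have hψ := hepi (ULift.{w} ℝ) _ edist isEMT_of_metricSpace (fun _ => .up 0) (.up ∘ g)
      (continuousShort_const _) (hup.continuousShort.comp hg)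
      (funext fun x => by simp [hg0 (Set.mem_range_self x)])
    exact hgy₀ (congrArg ULift.down (congrFun hψ y₀)).symm
  · intro hdense Z τZ dZ hZ ψ₁ ψ₂ hψ₁ hψ₂ hcomp
    have := hZ.t2Space
    exact Continuous.ext_on hdense hψ₁.1 hψ₂.1 (Set.forall_mem_range.mpr (congrFun hcomp))

/-- A continuous-short map `φ` between e.m.t. spaces is an epimorphism (in the category of
e.m.t. spaces with continuous-short morphisms) if and only if its image is dense in the
target. -/
theorem emt_epi_iff_denseRange {X : Type u} {Y : Type v}
    (τX : TopologicalSpace X) (dX : X → X → ℝ≥0∞)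
    (τY : TopologicalSpace Y) (dY : Y → Y → ℝ≥0∞)
    (hX : IsEMT τX dX) (hY : IsEMT τY dY)
    (φ : X → Y) (hφ : ContinuousShort τX dX τY dY φ) :
    (∀ (Z : Type w) (τZ : TopologicalSpace Z) (dZ : Z → Z → ℝ≥0∞), IsEMT τZ dZ →
      ∀ ψ₁ ψ₂ : Y → Z, ContinuousShort τY dY τZ dZ ψ₁ → ContinuousShort τY dY τZ dZ ψ₂ →
        ψ₁ ∘ φ = ψ₂ ∘ φ → ψ₁ = ψ₂) ↔
    @Dense Y τY (Set.range φ) :=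
  emt_epi_iff_denseRange_general τY dY hY φ
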